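/- A succulent is a polygonal 2-tree if and only if it is 2-connected. -/

import Mathlib

open SimpleGraph

/-- The graph obtained from `G` by adding a path of `m` new vertices `w_0, …, w_{m-1}`
together with the edges `{u, w_0}`, `{w_i, w_{i+1}}` for `i + 1 < m`, and `{w_{m-1}, v}`,
thereby creating a new cycle of length `m + 2` through the edge `{u, v}`. -/
def SimpleGraph.pathExtend {V : Type} (G : SimpleGraph V) (u v : V) (m : ℕ) :
    SimpleGraph (V ⊕ Fin m) :=
  SimpleGraph.fromRel (fun a b =>
    (∃ x y : V, a = Sum.inl x ∧ b = Sum.inl y ∧ G.Adj x y) ∨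
    (∃ i : Fin m, a = Sum.inl u ∧ b = Sum.inr i ∧ i.val = 0) ∨
    (∃ i j : Fin m, a = Sum.inr i ∧ b = Sum.inr j ∧ j.val = i.val + 1) ∨
    (∃ i : Fin m, a = Sum.inr i ∧ b = Sum.inl v ∧ i.val = m - 1))

/-- A polygonal 2-tree: any cycle graph on `k ≥ 3` vertices is a polygonal 2-tree, and
any graph obtained from a polygonal 2-tree by adding a path of `m ≥ 1` new vertices
whose ends are joined to the two endpoints of an existing edge (creating a new cycle
of length `m + 2` through that edge) is again a polygonal 2-tree (up to isomorphism). -/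
inductive SimpleGraph.IsPolygonal2Tree : {V : Type} → SimpleGraph V → Prop
  | cycle {V : Type} {G : SimpleGraph V} {k : ℕ} (hk : 3 ≤ k)
      (iso : Nonempty (G ≃g SimpleGraph.cycleGraph k)) : G.IsPolygonal2Tree
  | extend {V : Type} {G : SimpleGraph V} {u v : V} (huv : G.Adj u v)
      {m : ℕ} (hm : 1 ≤ m) {W : Type} {H : SimpleGraph W}
      (iso : Nonempty (H ≃g G.pathExtend u v m)) :
      G.IsPolygonal2Tree → H.IsPolygonal2Tree

/-- The graph obtained from `G` by attaching a new cycle of length `m + 1` at the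
vertex `v` (identifying one vertex of the new cycle with `v`): we add `m` new vertices
`w_0, …, w_{m-1}` together with the edges `{v, w_0}`, `{w_i, w_{i+1}}`, `{w_{m-1}, v}`. -/
def SimpleGraph.vertexAttach {V : Type} (G : SimpleGraph V) (v : V) (m : ℕ) :
    SimpleGraph (V ⊕ Fin m) :=
  SimpleGraph.fromRel (fun a b =>
    (∃ x y : V, a = Sum.inl x ∧ b = Sum.inl y ∧ G.Adj x y) ∨
    (∃ i : Fin m, a = Sum.inl v ∧ b = Sum.inr i ∧ (i.val = 0 ∨ i.val = m - 1)) ∨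
    (∃ i j : Fin m, a = Sum.inr i ∧ b = Sum.inr j ∧ j.val = i.val + 1))

/-- A succulent: any cycle graph on `k ≥ 3` vertices is a succulent, and a succulent
with a new cycle of length `≥ 3` attached, either by identifying exactly one vertex of
the new cycle with an existing vertex, or by identifying exactly one edge of the new
cycle (with its endpoints) with an existing edge, is again a succulent
(up to isomorphism). -/
inductive SimpleGraph.IsSucculent : {V : Type} → SimpleGraph V → Prop
  | cycle {V : Type} {G : SimpleGraph V} {k : ℕ} (hk : 3 ≤ k)
      (iso : Nonempty (G ≃g SimpleGraph.cycleGraph k)) : G.IsSucculent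
  | vertexAttach {V : Type} {G : SimpleGraph V} (v : V) {m : ℕ} (hm : 2 ≤ m)
      {W : Type} {H : SimpleGraph W} (iso : Nonempty (H ≃g G.vertexAttach v m)) :
      G.IsSucculent → H.IsSucculent
  | edgeAttach {V : Type} {G : SimpleGraph V} {u v : V} (huv : G.Adj u v)
      {m : ℕ} (hm : 1 ≤ m) {W : Type} {H : SimpleGraph W}
      (iso : Nonempty (H ≃g G.pathExtend u v m)) :
      G.IsSucculent → H.IsSucculent

/-- `G` is 2-connected: it is connected, has at least three vertices, and deleting any
single vertex leaves a connected graph. -/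
def SimpleGraph.TwoConnected {V : Type} (G : SimpleGraph V) : Prop :=
  G.Connected ∧ 3 ≤ Nat.card V ∧ ∀ v : V, (G.induce {u : V | u ≠ v}).Connected

/-!
Cycles are 2-connected, and gluing an ear along an edge `uv` preserves 2-connectivity: after
deleting a vertex, what is left of the old graph is still connected, and every surviving ear
vertex is joined to it through `u` or through `v`. Conversely, attaching a cycle at a single
vertex creates a cut vertex, and a cut vertex survives every later attachment, because the new
cycle meets the old graph in one vertex or one edge, which lies on one side of the cut. Hence
a succulent is either built from a cycle by edge attachments alone, i.e. a polygonal 2-tree,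
or it has a cut vertex.
-/

namespace SimpleGraph

open Sum

section Connectivity

variable {α β : Type*} {G : SimpleGraph α} {H : SimpleGraph β}

lemma induce_range_connected (f : G →g H) (hG : G.Connected) :
    (H.induce (Set.range f)).Connected :=
  hG.map ⟨Set.rangeFactorization f, f.map_rel⟩ Set.rangeFactorization_surjective

lemma induce_image_Icc_connected {f : ℕ → α} {a b : ℕ} (hab : a ≤ b)
    (hf : ∀ k, a ≤ k → k < b → G.Adj (f k) (f (k + 1))) :
    (G.induce (f '' Set.Icc a b)).Connected := by
  let φ : pathGraph (b - a + 1) →g G.induce (f '' Set.Icc a b) :=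
    { toFun i := ⟨f (a + i), Set.mem_image_of_mem f ⟨by omega, by omega⟩⟩
      map_rel' {i j} hij := by
        rcases pathGraph_adj.mp hij with h | h
        · simpa [← h, ← add_assoc] using hf (a + i) (by omega) (by omega)
        · simpa [← h, ← add_assoc] using (hf (a + j) (by omega) (by omega)).symm }
  refine (pathGraph_connected _).map φ ?_
  rintro ⟨_, k, ⟨hak, hkb⟩, rfl⟩
  exact ⟨⟨k - a, by omega⟩, Subtype.ext (congrArg f (by simp; omega))⟩

lemma induce_connected_of_core {P s : Set α} (hP : (G.induce P).Connected) (hPs : P ⊆ s)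
    (hcover : ∀ a ∈ s, a ∉ P →
      ∃ Q ⊆ s, a ∈ Q ∧ (P ∩ Q).Nonempty ∧ (G.induce Q).Connected) :
    (G.induce s).Connected := by
  obtain ⟨⟨p, hp⟩⟩ := hP.nonempty
  refine G.induce_connected_of_patches p (hPs hp) fun {a} ha => ?_
  by_cases haP : a ∈ P
  · exact ⟨P, hPs, hp, haP, hP.preconnected _ _⟩
  obtain ⟨Q, hQs, haQ, hPQ, hQ⟩ := hcover a ha haP
  exact ⟨P ∪ Q, Set.union_subset hPs hQs, Or.inl hp, Or.inr haQ,
    (induce_union_connected hP.preconnected hQ.preconnected hPQ).preconnected _ _⟩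

end Connectivity

section TwoConnected

variable {V W : Type} {G : SimpleGraph V}

lemma exists_ne_ne_of_three_le_card (h : 3 ≤ Nat.card V) (a b : V) : ∃ z, z ≠ a ∧ z ≠ b := by
  have : Finite V := Nat.finite_of_card_ne_zero (by omega)
  by_contra! hab
  have hsurj : Function.Surjective fun t : Bool => cond t a b := fun z => by
    by_cases hz : z = a
    · exact ⟨true, hz.symm⟩
    · exact ⟨false, (hab z hz).symm⟩
  have := Nat.card_le_card_of_surjective _ hsurj
  simp only [Nat.card_eq_fintype_card, Fintype.card_bool] at this
  omega

lemma TwoConnected.of_induce_ne_connected (hcard : 3 ≤ Nat.card V)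
    (hdel : ∀ v, (G.induce {u | u ≠ v}).Connected) : G.TwoConnected := by
  have : Nonempty V := (Nat.card_pos_iff.mp (by omega)).1
  refine ⟨⟨fun a b => ?_⟩, hcard, hdel⟩
  obtain ⟨z, hza, hzb⟩ := exists_ne_ne_of_three_le_card hcard a b
  exact ((hdel z).preconnected ⟨a, hza.symm⟩ ⟨b, hzb.symm⟩).map (Embedding.induce _).toHom

lemma TwoConnected.of_iso {H : SimpleGraph W} (e : G ≃g H) (hG : G.TwoConnected) :
    H.TwoConnected := by
  obtain ⟨-, hcard, hdel⟩ := hG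
  refine .of_induce_ne_connected (Nat.card_congr e.toEquiv ▸ hcard) fun w => ?_
  have hs : {b | b ≠ w} = Set.range (e.toHom.comp (Embedding.induce {a | a ≠ e.symm w}).toHom) := by
    ext b
    refine ⟨fun hb => ⟨⟨e.symm b, by simpa using hb⟩, by simp⟩, ?_⟩
    rintro ⟨⟨a, ha⟩, rfl⟩
    exact fun h => ha (e.eq_symm_apply.mpr h)
  rw [hs]
  exact induce_range_connected _ (hdel (e.symm w))

open Fin.NatCast Fin.CommRing in
lemma cycleGraph_twoConnected {k : ℕ} (hk : 3 ≤ k) : (cycleGraph k).TwoConnected := by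
  obtain ⟨n, rfl⟩ : ∃ n, k = n + 3 := ⟨k - 3, by omega⟩
  refine .of_induce_ne_connected (by simp) fun x => ?_
  have hs : {u | u ≠ x} = (fun j : ℕ => x + (j : Fin (n + 3))) '' Set.Icc 1 (n + 2) := by
    ext u
    refine ⟨fun hu => ⟨(u - x).val, ⟨?_, by omega⟩, by simp⟩, ?_⟩
    · exact Nat.one_le_iff_ne_zero.mpr (Fin.val_ne_iff.mpr (sub_ne_zero.mpr hu))
    · rintro ⟨j, ⟨h1, h2⟩, rfl⟩ h
      have := (Fin.natCast_eq_zero).mp (add_eq_left.mp h)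
      exact absurd (Nat.le_of_dvd (by omega) this) (by omega)
  rw [hs]
  refine induce_image_Icc_connected (by omega) fun j _ _ => ?_
  rw [cycleGraph_adj]
  right
  push_cast
  ring

end TwoConnected

section PathExtend

variable {V : Type} {G : SimpleGraph V} {u v : V} {m : ℕ}

lemma pathExtend_adj_inl_inl {x y : V} :
    (G.pathExtend u v m).Adj (inl x) (inl y) ↔ G.Adj x y := by
  simp only [pathExtend, fromRel_adj]
  constructor
  · rintro ⟨-, h | h⟩ <;> aesop (add safe Adj.symm)
  · exact fun h => ⟨by simp [h.ne], Or.inl (Or.inl ⟨x, y, rfl, rfl, h⟩)⟩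

lemma eq_or_eq_of_pathExtend_adj_inr_inl {i : Fin m} {x : V}
    (h : (G.pathExtend u v m).Adj (inr i) (inl x)) : x = u ∨ x = v := by
  simp only [pathExtend, fromRel_adj] at h
  aesop

/-- The `k`-th vertex of the path `u, w_0, …, w_{m-1}, v` added by `pathExtend`
(and `v` from `k = m + 1` on). -/
def earVertex (u v : V) (m : ℕ) : ℕ → V ⊕ Fin m
  | 0 => inl u
  | k + 1 => if h : k < m then inr ⟨k, h⟩ else inl v

lemma earVertex_eq_inr_iff {k : ℕ} {i : Fin m} : earVertex u v m k = inr i ↔ k = i + 1 := by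
  cases k <;> grind [earVertex]

lemma earVertex_eq_inl_iff {k : ℕ} {c : V} :
    earVertex u v m k = inl c ↔ (k = 0 ∧ u = c) ∨ (m < k ∧ v = c) := by
  cases k <;> grind [earVertex]

lemma pathExtend_adj_earVertex (huv : G.Adj u v) {k : ℕ} (hk : k ≤ m) :
    (G.pathExtend u v m).Adj (earVertex u v m k) (earVertex u v m (k + 1)) := by
  cases k <;> simp only [earVertex] <;> split_ifs <;> simp [pathExtend, huv, huv.ne] <;> omega

lemma pathExtend_twoConnected (huv : G.Adj u v) (hG : G.TwoConnected) :
    (G.pathExtend u v m).TwoConnected := by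
  obtain ⟨hconn, hcard, hdel⟩ := hG
  have : Finite V := Nat.finite_of_card_ne_zero (by omega)
  refine .of_induce_ne_connected (by rw [Nat.card_sum]; omega) fun z => ?_
  set H := G.pathExtend u v m
  let ι : G →g H := ⟨inl, pathExtend_adj_inl_inl.mpr⟩
  have hear {a b : ℕ} (hab : a ≤ b) (hb : b ≤ m + 1) :
      (H.induce (earVertex u v m '' Set.Icc a b)).Connected :=
    induce_image_Icc_connected hab fun k _ hk => pathExtend_adj_earVertex huv (by omega)
  -- the new vertex `w_i` is joined inside `s` to `u` or to `v` along the ear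
  have viaU {s P : Set (V ⊕ Fin m)} (i : Fin m) (hu : inl u ∈ P)
      (hs : ∀ k ≤ i.val + 1, earVertex u v m k ∈ s) :
      ∃ Q ⊆ s, inr i ∈ Q ∧ (P ∩ Q).Nonempty ∧ (H.induce Q).Connected :=
    ⟨earVertex u v m '' Set.Icc 0 (i.val + 1), Set.image_subset_iff.mpr fun k hk => hs k hk.2,
      ⟨i.val + 1, ⟨by omega, le_rfl⟩, earVertex_eq_inr_iff.mpr rfl⟩,
      ⟨inl u, hu, 0, ⟨le_rfl, by omega⟩, rfl⟩, hear (by omega) (by omega)⟩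
  have viaV {s P : Set (V ⊕ Fin m)} (i : Fin m) (hv : inl v ∈ P)
      (hs : ∀ k, i.val + 1 ≤ k → k ≤ m + 1 → earVertex u v m k ∈ s) :
      ∃ Q ⊆ s, inr i ∈ Q ∧ (P ∩ Q).Nonempty ∧ (H.induce Q).Connected :=
    ⟨earVertex u v m '' Set.Icc (i.val + 1) (m + 1),
      Set.image_subset_iff.mpr fun k hk => hs k hk.1 hk.2,
      ⟨i.val + 1, ⟨le_rfl, by omega⟩, earVertex_eq_inr_iff.mpr rfl⟩,
      ⟨inl v, hv, m + 1, ⟨by omega, le_rfl⟩, earVertex_eq_inl_iff.mpr (.inr ⟨by omega, rfl⟩)⟩,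
      hear (by omega) le_rfl⟩
  rcases z with c | t
  · refine induce_connected_of_core
      (induce_range_connected (ι.comp (Embedding.induce {x | x ≠ c}).toHom) (hdel c))
      (by rintro _ ⟨⟨x, hx⟩, rfl⟩; exact fun h => hx (inl_injective h)) ?_
    rintro (x | i) hx hP
    · exact absurd ⟨⟨x, fun h => hx (h ▸ rfl)⟩, rfl⟩ hP
    by_cases hcu : c = u
    · subst hcu
      refine viaV i ⟨⟨v, huv.ne'⟩, rfl⟩ fun k hk _ h => ?_
      rcases earVertex_eq_inl_iff.mp h with ⟨hk0, -⟩ | ⟨-, hvc⟩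
      · omega
      · exact huv.ne' hvc
    · refine viaU i ⟨⟨u, Ne.symm hcu⟩, rfl⟩ fun k hk h => ?_
      rcases earVertex_eq_inl_iff.mp h with ⟨-, huc⟩ | ⟨hmk, -⟩
      · exact hcu huc.symm
      · omega
  · refine induce_connected_of_core (induce_range_connected ι hconn)
      (by rintro _ ⟨x, rfl⟩; exact inl_ne_inr) ?_
    rintro (x | i) hi hP
    · exact absurd ⟨x, rfl⟩ hP
    have hit : i.val ≠ t.val := fun h => hi (congrArg inr (Fin.ext h))
    rcases Nat.lt_or_gt_of_ne hit with hlt | hgt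
    · exact viaU i ⟨u, rfl⟩ fun k hk h => by rw [earVertex_eq_inr_iff.mp h] at hk; omega
    · exact viaV i ⟨v, rfl⟩ fun k hk _ h => by rw [earVertex_eq_inr_iff.mp h] at hk; omega

end PathExtend

lemma IsPolygonal2Tree.twoConnected {V : Type} {G : SimpleGraph V} (h : G.IsPolygonal2Tree) :
    G.TwoConnected := by
  induction h with
  | cycle hk iso => exact (cycleGraph_twoConnected hk).of_iso iso.some.symm
  | extend huv _ iso _ ih => exact (pathExtend_twoConnected huv ih).of_iso iso.some.symm

structure IsSeparation {V : Type} (G : SimpleGraph V) (x : V) (A : Set V) : Prop where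
  not_mem : x ∉ A
  nonempty : A.Nonempty
  exists_not_mem : ∃ b ∉ A, b ≠ x
  mem_of_adj : ∀ {a b}, a ∈ A → G.Adj a b → b ≠ x → b ∈ A

namespace IsSeparation

variable {V W : Type} {G : SimpleGraph V} {x : V} {A : Set V}

lemma not_twoConnected (h : G.IsSeparation x A) : ¬ G.TwoConnected := by
  rintro ⟨-, -, hdel⟩
  obtain ⟨a, ha⟩ := h.nonempty
  obtain ⟨b, hbA, hbx⟩ := h.exists_not_mem
  have hax : a ≠ x := ne_of_mem_of_not_mem ha h.not_mem
  have hclosed (c : {u | u ≠ x})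
      (hc : Relation.ReflTransGen (G.induce {u | u ≠ x}).Adj ⟨a, hax⟩ c) : (c : V) ∈ A := by
    induction hc with
    | refl => exact ha
    | @tail c d _ hcd ih => exact h.mem_of_adj ih hcd d.prop
  exact hbA (hclosed ⟨b, hbx⟩ ((reachable_iff_reflTransGen _ _).mp ((hdel x).preconnected _ _)))

lemma map_iso {H : SimpleGraph W} (e : G ≃g H) (h : G.IsSeparation x A) :
    H.IsSeparation (e x) (e '' A) where
  not_mem := by simpa using h.not_mem
  nonempty := h.nonempty.image e
  exists_not_mem := by
    obtain ⟨b, hbA, hbx⟩ := h.exists_not_mem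
    exact ⟨e b, by simpa using hbA, by simpa using hbx⟩
  mem_of_adj := by
    rintro _ b ⟨a, ha, rfl⟩ hab hbx
    refine ⟨e.symm b, h.mem_of_adj ha ?_ ?_, by simp⟩
    · simpa using e.symm.map_rel_iff.mpr hab
    · simpa [e.symm_apply_eq] using hbx

/-- The new vertices join the side of the separation they attach to. -/
lemma exists_sum {H : SimpleGraph (V ⊕ W)} (h : G.IsSeparation x A) (P : V → Prop)
    (hinl : ∀ {a b}, H.Adj (inl a) (inl b) → G.Adj a b)
    (hinr : ∀ {i a}, H.Adj (inr i) (inl a) → P a)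
    (hP : ∀ {a b}, a ∈ A → P a → P b → b ≠ x → b ∈ A) :
    ∃ A', H.IsSeparation (inl x) A' := by
  obtain ⟨b, hbA, hbx⟩ := h.exists_not_mem
  by_cases hA : ∃ a ∈ A, P a
  · obtain ⟨a₀, ha₀, hPa₀⟩ := hA
    refine ⟨inl '' A ∪ Set.range inr, ⟨?_, h.nonempty.image inl |>.inl, ?_, ?_⟩⟩
    · simpa using h.not_mem
    · exact ⟨inl b, by simpa using hbA, by simpa using hbx⟩
    rintro _ (c | j) (⟨a, ha, rfl⟩ | ⟨i, rfl⟩) hadj hcx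
    · exact .inl ⟨c, h.mem_of_adj ha (hinl hadj) (by simpa using hcx), rfl⟩
    · exact .inl ⟨c, hP ha₀ hPa₀ (hinr hadj) (by simpa using hcx), rfl⟩
    all_goals exact .inr ⟨j, rfl⟩
  · refine ⟨inl '' A, ⟨by simpa using h.not_mem, h.nonempty.image inl, ?_, ?_⟩⟩
    · exact ⟨inl b, by simpa using hbA, by simpa using hbx⟩
    rintro _ (c | j) ⟨a, ha, rfl⟩ hadj hcx
    · exact ⟨c, h.mem_of_adj ha (hinl hadj) (by simpa using hcx), rfl⟩
    · exact absurd ⟨a, ha, hinr hadj.symm⟩ hA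

end IsSeparation

section VertexAttach

variable {V : Type} {G : SimpleGraph V} {v : V} {m : ℕ}

lemma vertexAttach_adj_inl_inl {x y : V} :
    (G.vertexAttach v m).Adj (inl x) (inl y) ↔ G.Adj x y := by
  simp only [vertexAttach, fromRel_adj]
  constructor
  · rintro ⟨-, h | h⟩ <;> aesop (add safe Adj.symm)
  · exact fun h => ⟨by simp [h.ne], Or.inl (Or.inl ⟨x, y, rfl, rfl, h⟩)⟩

lemma eq_of_vertexAttach_adj_inr_inl {i : Fin m} {x : V}
    (h : (G.vertexAttach v m).Adj (inr i) (inl x)) : x = v := by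
  simp only [vertexAttach, fromRel_adj] at h
  aesop

lemma isSeparation_vertexAttach {w : V} (hw : w ≠ v) (hm : 1 ≤ m) :
    (G.vertexAttach v m).IsSeparation (inl v) (Set.range inr) where
  not_mem := by simp
  nonempty := ⟨inr ⟨0, hm⟩, ⟨_, rfl⟩⟩
  exists_not_mem := ⟨inl w, by simp, by simpa using hw⟩
  mem_of_adj := by
    rintro _ (x | j) ⟨i, rfl⟩ hadj hxv
    · exact absurd (congrArg inl (eq_of_vertexAttach_adj_inr_inl hadj)) hxv
    · exact ⟨j, rfl⟩

end VertexAttach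

lemma IsSucculent.nontrivial {V : Type} {G : SimpleGraph V} (h : G.IsSucculent) :
    Nontrivial V := by
  cases h with
  | @cycle _ _ k hk iso =>
    have : Nontrivial (Fin k) := Fin.nontrivial_iff_two_le.mpr (by omega)
    exact iso.some.toEquiv.nontrivial
  | @vertexAttach _ _ v m hm _ _ iso _ =>
    have : Nontrivial (_ ⊕ Fin m) := nontrivial_of_ne (inl v) (inr ⟨0, by omega⟩) inl_ne_inr
    exact iso.some.toEquiv.nontrivial
  | @edgeAttach _ _ u _ _ m hm _ _ iso _ =>
    have : Nontrivial (_ ⊕ Fin m) := nontrivial_of_ne (inl u) (inr ⟨0, by omega⟩) inl_ne_inr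
    exact iso.some.toEquiv.nontrivial

lemma IsSucculent.isPolygonal2Tree_or_isSeparation {V : Type} {G : SimpleGraph V}
    (h : G.IsSucculent) : G.IsPolygonal2Tree ∨ ∃ x A, G.IsSeparation x A := by
  induction h with
  | cycle hk iso => exact .inl (.cycle hk iso)
  | @vertexAttach V G v m hm W H iso hG _ =>
    have := hG.nontrivial
    obtain ⟨w, hw⟩ := exists_ne v
    exact .inr ⟨_, _, (isSeparation_vertexAttach hw (by omega)).map_iso iso.some.symm⟩
  | @edgeAttach V G u v huv m hm W H iso _ ih =>
    rcases ih with hT | ⟨x, A, hsep⟩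
    · exact .inl (.extend huv hm iso hT)
    have hends {a b : V} (ha : a ∈ A) (hau : a = u ∨ a = v) (hbu : b = u ∨ b = v) (hbx : b ≠ x) :
        b ∈ A := by
      rcases hau with rfl | rfl <;> rcases hbu with rfl | rfl
      exacts [ha, hsep.mem_of_adj ha huv hbx, hsep.mem_of_adj ha huv.symm hbx, ha]
    obtain ⟨A', hsep'⟩ := hsep.exists_sum (H := G.pathExtend u v m) _
      pathExtend_adj_inl_inl.mp eq_or_eq_of_pathExtend_adj_inr_inl hends
    exact .inr ⟨_, _, hsep'.map_iso iso.some.symm⟩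

end SimpleGraph

/-- A succulent is a polygonal 2-tree if and only if it is 2-connected. -/
theorem succulent_polygonal2Tree_iff_twoConnected {V : Type} (G : SimpleGraph V)
    (h : G.IsSucculent) :
    G.IsPolygonal2Tree ↔ G.TwoConnected :=
  ⟨IsPolygonal2Tree.twoConnected, fun h2 =>
    h.isPolygonal2Tree_or_isSeparation.resolve_right fun ⟨_, _, hsep⟩ => hsep.not_twoConnected h2⟩
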